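/- If all five partial derivatives of f vanish both at (0,0,0,1,0) and at (0,0,0,0,1) (i.e. the cubic X is singular at the two points [0:0:0:1:0] and [0:0:0:0:1] of the line l), then L₁₁ = 0 and L₂₂ = 0, and det A = L₁₂·(2Q₁Q₂ − L₁₂C). In particular the degree-5 polynomial det A factors as the product of the linear form L₁₂ and the quartic 2Q₁Q₂ − L₁₂C, and Q_Θ = −L₁₂² is the square of a linear form (the theta-conic is the double line {L₁₂ = 0}). -/

import Mathlib

/-!
At `e = [0:0:0:1:0]` the coordinates `x, y, z` vanish, so for `i ∈ {x, y, z}` the derivative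
`∂ᵢf(e)` reduces to `∂ᵢL₁₁`: the terms carrying `v` vanish, and `∂ᵢQ₁`, `∂ᵢC` are forms of positive
degree in `x, y, z`. Singularity at `e` thus kills every partial derivative of the linear form
`L₁₁`, and Euler's identity gives `L₁₁ = 0`; symmetrically `L₂₂ = 0`. What remains are ring
identities, with `-L₁₂² = (i L₁₂)²`.
-/

namespace MvPolynomial

variable {R σ : Type*} [CommSemiring R] {s : Set σ} {p : MvPolynomial σ R}

theorem pderiv_mem_supported (i : σ) (hp : p ∈ supported R s) : pderiv i p ∈ supported R s := by
  rw [mem_supported] at hp ⊢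
  intro j hj
  obtain ⟨m, hm, hjm⟩ := (mem_vars_iff_mem_support j).mp hj
  rw [mem_support_iff, coeff_pderiv] at hm
  refine hp ((mem_vars_iff_mem_support j).mpr
    ⟨m + Finsupp.single i 1, mem_support_iff.mpr (left_ne_zero_of_mul hm), ?_⟩)
  rw [Finsupp.mem_support_iff] at hjm ⊢
  simp [hjm]

theorem eval_eq_constantCoeff_of_mem_supported (hp : p ∈ supported R s) {g : σ → R}
    (hg : ∀ i ∈ s, g i = 0) : eval g p = constantCoeff p :=
  eval₂Hom_eq_constantCoeff_of_vars _ fun i hi => hg i (mem_supported.mp hp hi)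

theorem IsHomogeneous.eval_eq_zero_of_mem_supported {n : ℕ} (hp : p.IsHomogeneous n) (hn : n ≠ 0)
    (hps : p ∈ supported R s) {g : σ → R} (hg : ∀ i ∈ s, g i = 0) : eval g p = 0 := by
  rw [eval_eq_constantCoeff_of_mem_supported hps hg, constantCoeff_eq]
  exact hp.coeff_eq_zero (by simpa using hn.symm)

theorem IsHomogeneous.pderiv_eq_C_eval (hp : p.IsHomogeneous 1) (i : σ) (g : σ → R) :
    pderiv i p = C (eval g (pderiv i p)) := by
  obtain ⟨c, hc⟩ : ∃ c, pderiv i p = C c :=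
    ⟨_, totalDegree_eq_zero_iff_eq_C.mp ((totalDegree_zero_iff_isHomogeneous _).mpr hp.pderiv)⟩
  rw [hc, eval_C]

theorem IsHomogeneous.eq_zero_of_eval_pderiv_eq_zero [Fintype σ] (hp : p.IsHomogeneous 1)
    (hps : p ∈ supported R s) (g : σ → R) (hg : ∀ i ∈ s, eval g (pderiv i p) = 0) : p = 0 := by
  have hpderiv : ∀ i, pderiv i p = 0 := by
    intro i
    by_cases hi : i ∈ s
    · rw [hp.pderiv_eq_C_eval i g, hg i hi, C_0]
    · exact pderiv_eq_zero_of_notMem_vars fun hv => hi (mem_supported.mp hps hv)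
  simpa [hpderiv] using hp.sum_X_mul_pderiv.symm

section CubicThroughLine

noncomputable def cubicThroughLine (a b : σ) (L11 L12 L22 Q1 Q2 C : MvPolynomial σ R) :
    MvPolynomial σ R :=
  X a ^ 2 * L11 + 2 * X a * X b * L12 + X b ^ 2 * L22 + 2 * X a * Q1 + 2 * X b * Q2 + C

theorem cubicThroughLine_comm (a b : σ) (L11 L12 L22 Q1 Q2 C : MvPolynomial σ R) :
    cubicThroughLine a b L11 L12 L22 Q1 Q2 C = cubicThroughLine b a L22 L12 L11 Q2 Q1 C := by
  unfold cubicThroughLine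
  ring

variable [DecidableEq σ] {a b : σ} {L11 L12 L22 Q1 Q2 C : MvPolynomial σ R}

theorem eval_pderiv_cubicThroughLine {i : σ} (hab : a ≠ b) (ha : a ∉ s) (hb : b ∉ s) (hi : i ∈ s)
    (hQ1 : Q1.IsHomogeneous 2) (hC : C.IsHomogeneous 3)
    (hQ1s : Q1 ∈ supported R s) (hCs : C ∈ supported R s) :
    eval (fun j => if j = a then 1 else 0) (pderiv i (cubicThroughLine a b L11 L12 L22 Q1 Q2 C)) =
      eval (fun j => if j = a then 1 else 0) (pderiv i L11) := by
  have hg : ∀ j ∈ s, (if j = a then (1 : R) else 0) = 0 := fun j hj =>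
    if_neg (by rintro rfl; exact ha hj)
  have hQ1' :=
    hQ1.pderiv.eval_eq_zero_of_mem_supported one_ne_zero (pderiv_mem_supported i hQ1s) hg
  have hC' :=
    hC.pderiv.eval_eq_zero_of_mem_supported two_ne_zero (pderiv_mem_supported i hCs) hg
  have hai : a ≠ i := fun h => ha (h ▸ hi)
  have hbi : b ≠ i := fun h => hb (h ▸ hi)
  have h2 : pderiv i (2 : MvPolynomial σ R) = 0 := by
    rw [← map_ofNat MvPolynomial.C 2, pderiv_C]
  simp only [cubicThroughLine, map_add, pderiv_mul, pderiv_pow, pderiv_X_of_ne hai,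
    pderiv_X_of_ne hbi, h2, map_mul, map_pow, eval_X, hQ1', hC', if_true, if_neg hab.symm, map_zero]
  ring

theorem eq_zero_of_singular_cubicThroughLine [Fintype σ] (hab : a ≠ b) (ha : a ∉ s) (hb : b ∉ s)
    (hL11 : L11.IsHomogeneous 1) (hQ1 : Q1.IsHomogeneous 2) (hC : C.IsHomogeneous 3)
    (hL11s : L11 ∈ supported R s) (hQ1s : Q1 ∈ supported R s) (hCs : C ∈ supported R s)
    (hsing : ∀ i ∈ s, eval (fun j => if j = a then 1 else 0)
      (pderiv i (cubicThroughLine a b L11 L12 L22 Q1 Q2 C)) = 0) :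
    L11 = 0 :=
  hL11.eq_zero_of_eval_pderiv_eq_zero hL11s _ fun i hi =>
    (eval_pderiv_cubicThroughLine hab ha hb hi hQ1 hC hQ1s hCs).symm.trans (hsing i hi)

end CubicThroughLine

end MvPolynomial

open MvPolynomial

theorem stmt_18_general
    (L11 L12 L22 Q1 Q2 C : MvPolynomial (Fin 5) ℂ)
    (hL11 : L11.IsHomogeneous 1) (hL12 : L12.IsHomogeneous 1) (hL22 : L22.IsHomogeneous 1)
    (hQ1 : Q1.IsHomogeneous 2) (hQ2 : Q2.IsHomogeneous 2) (hC : C.IsHomogeneous 3)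
    (hL11s : L11 ∈ MvPolynomial.supported ℂ ({0, 1, 2} : Set (Fin 5)))
    (hL22s : L22 ∈ MvPolynomial.supported ℂ ({0, 1, 2} : Set (Fin 5)))
    (hQ1s : Q1 ∈ MvPolynomial.supported ℂ ({0, 1, 2} : Set (Fin 5)))
    (hQ2s : Q2 ∈ MvPolynomial.supported ℂ ({0, 1, 2} : Set (Fin 5)))
    (hCs : C ∈ MvPolynomial.supported ℂ ({0, 1, 2} : Set (Fin 5)))
    (f : MvPolynomial (Fin 5) ℂ)
    (hf : f = X 3 ^ 2 * L11 + 2 * X 3 * X 4 * L12 + X 4 ^ 2 * L22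
      + 2 * X 3 * Q1 + 2 * X 4 * Q2 + C)
    (A : Matrix (Fin 3) (Fin 3) (MvPolynomial (Fin 5) ℂ))
    (hA : A = !![L11, L12, Q1; L12, L22, Q2; Q1, Q2, C])
    (hsing1 : ∀ i : Fin 5,
      eval (fun j => if j = 3 then (1 : ℂ) else 0) (pderiv i f) = 0)
    (hsing2 : ∀ i : Fin 5,
      eval (fun j => if j = 4 then (1 : ℂ) else 0) (pderiv i f) = 0) :
    L11 = 0 ∧ L22 = 0 ∧
    A.det = L12 * (2 * Q1 * Q2 - L12 * C) ∧
    L11 * L22 - L12 ^ 2 = -(L12 ^ 2) ∧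
    ∃ M : MvPolynomial (Fin 5) ℂ, M.IsHomogeneous 1 ∧ L11 * L22 - L12 ^ 2 = M ^ 2 := by
  subst hf hA
  have hL11z : L11 = 0 := eq_zero_of_singular_cubicThroughLine (s := {0, 1, 2}) (a := 3) (b := 4)
    (by decide) (by simp) (by simp) hL11 hQ1 hC hL11s hQ1s hCs fun i _ => hsing1 i
  have hL22z : L22 = 0 := eq_zero_of_singular_cubicThroughLine (s := {0, 1, 2}) (a := 4) (b := 3)
    (by decide) (by simp) (by simp) hL22 hQ2 hC hL22s hQ2s hCs fun i _ => by
      rw [← cubicThroughLine_comm]; exact hsing2 i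
  subst hL11z hL22z
  refine ⟨rfl, rfl, ?_, by ring, MvPolynomial.C Complex.I * L12, ?_, ?_⟩
  · rw [Matrix.det_fin_three]
    simp only [Matrix.of_apply, Matrix.cons_val', Matrix.cons_val_zero, Matrix.cons_val_one,
      Matrix.cons_val, Matrix.cons_val_fin_one]
    ring
  · simpa using (isHomogeneous_C (Fin 5) Complex.I).mul hL12
  · rw [mul_pow, ← map_pow, Complex.I_sq, map_neg, map_one]
    ring

/-- If the cubic f = u²L₁₁ + 2uvL₁₂ + v²L₂₂ + 2uQ₁ + 2vQ₂ + C is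
singular at both [0:0:0:1:0] and [0:0:0:0:1], then L₁₁ = 0, L₂₂ = 0, and
det A = L₁₂·(2Q₁Q₂ − L₁₂C); in particular the quintic det A factors as the product of
the linear form L₁₂ and the quartic 2Q₁Q₂ − L₁₂C, and Q_Θ = L₁₁L₂₂ − L₁₂² = −L₁₂² is
the square of a homogeneous linear form. -/
theorem stmt_18
    (L11 L12 L22 Q1 Q2 C : MvPolynomial (Fin 5) ℂ)
    (hL11 : L11.IsHomogeneous 1) (hL12 : L12.IsHomogeneous 1) (hL22 : L22.IsHomogeneous 1)
    (hQ1 : Q1.IsHomogeneous 2) (hQ2 : Q2.IsHomogeneous 2) (hC : C.IsHomogeneous 3)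
    (hL11s : L11 ∈ MvPolynomial.supported ℂ ({0, 1, 2} : Set (Fin 5)))
    (hL12s : L12 ∈ MvPolynomial.supported ℂ ({0, 1, 2} : Set (Fin 5)))
    (hL22s : L22 ∈ MvPolynomial.supported ℂ ({0, 1, 2} : Set (Fin 5)))
    (hQ1s : Q1 ∈ MvPolynomial.supported ℂ ({0, 1, 2} : Set (Fin 5)))
    (hQ2s : Q2 ∈ MvPolynomial.supported ℂ ({0, 1, 2} : Set (Fin 5)))
    (hCs : C ∈ MvPolynomial.supported ℂ ({0, 1, 2} : Set (Fin 5)))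
    (f : MvPolynomial (Fin 5) ℂ)
    (hf : f = X 3 ^ 2 * L11 + 2 * X 3 * X 4 * L12 + X 4 ^ 2 * L22
      + 2 * X 3 * Q1 + 2 * X 4 * Q2 + C)
    (A : Matrix (Fin 3) (Fin 3) (MvPolynomial (Fin 5) ℂ))
    (hA : A = !![L11, L12, Q1; L12, L22, Q2; Q1, Q2, C])
    (hsing1 : ∀ i : Fin 5,
      eval (fun j => if j = 3 then (1 : ℂ) else 0) (pderiv i f) = 0)
    (hsing2 : ∀ i : Fin 5,
      eval (fun j => if j = 4 then (1 : ℂ) else 0) (pderiv i f) = 0) :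
    L11 = 0 ∧ L22 = 0 ∧
    A.det = L12 * (2 * Q1 * Q2 - L12 * C) ∧
    L11 * L22 - L12 ^ 2 = -(L12 ^ 2) ∧
    ∃ M : MvPolynomial (Fin 5) ℂ, M.IsHomogeneous 1 ∧ L11 * L22 - L12 ^ 2 = M ^ 2 :=
  stmt_18_general L11 L12 L22 Q1 Q2 C hL11 hL12 hL22 hQ1 hQ2 hC hL11s hL22s hQ1s hQ2s hCs f hf A hA
    hsing1 hsing2
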